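/- arXiv:math/0111014 — 2 statements merged into one kernel-verified Lean document; each statement's English description precedes it below -/
import Mathlib

section
/- Assume φ : A → ℕ is conserved by F. For a finitely supported configuration a : ℤ → A and z ∈ ℤ, define the rightward flux I⃗_z(a) = ∑_{y ≤ z} φ(a(y)) − ∑_{y ≤ z} φ(F(a)(y)) ∈ ℤ, and the leftward flux I↼_z(a) = −I⃗_{z−1}(a). Then for every finitely supported a : ℤ → A and every z ∈ ℤ: (i) I⃗_z(a) ≤ ∑_{y = z−B}^{z} φ(a(y)); (ii) I⃗_z(a) ≤ ∑_{y = z}^{z+B} φ(F(a)(y)); (iii) I↼_z(a) ≤ ∑_{y = z}^{z+B} φ(a(y)); (iv) I↼_z(a) ≤ ∑_{y = z−B}^{z} φ(F(a)(y)). -/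
/-- The cellular automaton induced by a local rule `f` on neighbourhood `B`. -/
def induce {X A : Type*} [AddCommGroup X] (B : Finset X) (f : (B → A) → A)
    (a : X → A) : X → A :=
  fun x => f fun b => a (x + b.1)

/-- `ψ` is conserved by the CA induced by `f` on `B`. -/
def conserved {X A Z : Type*} [AddCommGroup X] [AddCommMonoid Z] (B : Finset X)
    (f : (B → A) → A) (ψ : A → Z) : Prop :=
  (∃ a : A, ψ a = 0) ∧
  (∀ a : X → A, (Function.support fun x => ψ (a x)).Finite →
      (Function.support fun x => ψ (induce B f a x)).Finite) ∧
  (∀ a : X → A, (Function.support fun x => ψ (a x)).Finite →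
      ∑ᶠ x, ψ (induce B f a x) = ∑ᶠ x, ψ (a x))

/-- The rightward flux from `z` to `z+1`:
`∑_{y ≤ z} φ(a(y)) − ∑_{y ≤ z} φ(F(a)(y))`. -/
noncomputable def flux {A : Type*} (B : ℤ) (f : ((Finset.Icc (-B) B : Finset ℤ) → A) → A)
    (φ : A → ℕ) (a : ℤ → A) (z : ℤ) : ℤ :=
  (∑ᶠ y ∈ Set.Iic z, (φ (a y) : ℤ)) -
    ∑ᶠ y ∈ Set.Iic z, (φ (induce (Finset.Icc (-B) B) f a y) : ℤ)

section Aux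

/-- Split a partial sum at `w ≤ z`. -/
lemma aux_split (g : ℤ → ℕ) (hg : (Function.support g).Finite) {w z : ℤ} (h : w ≤ z) :
    ∑ᶠ y ∈ Set.Iic z, g y = (∑ᶠ y ∈ Set.Iic w, g y) + ∑ y ∈ Finset.Ioc w z, g y := by
  rw [← Set.Iic_union_Ioc_eq_Iic h,
    finsum_mem_union' (Set.Iic_disjoint_Ioc le_rfl)
      (hg.inter_of_right _) (hg.inter_of_right _)]
  congr 1
  rw [← Finset.coe_Ioc, finsum_mem_coe_finset]

/-- Split the total sum at `w`. -/
lemma aux_total (g : ℤ → ℕ) (hg : (Function.support g).Finite) (w : ℤ) :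
    ∑ᶠ y, g y = (∑ᶠ y ∈ Set.Iic w, g y) + ∑ᶠ y ∈ Set.Ioi w, g y := by
  rw [← finsum_mem_univ, ← Set.Iic_union_Ioi (a := w),
    finsum_mem_union' (Set.Iic_disjoint_Ioi le_rfl)
      (hg.inter_of_right _) (hg.inter_of_right _)]

lemma aux_cast (g : ℤ → ℕ) (hg : (Function.support g).Finite) (s : Set ℤ) :
    ∑ᶠ y ∈ s, (g y : ℤ) = ((∑ᶠ y ∈ s, g y : ℕ) : ℤ) :=
  ((Nat.castAddMonoidHom ℤ).map_finsum_mem' (hg.inter_of_right _)).symm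

end Aux

theorem stmt15 {A : Type*} [Fintype A] [Nonempty A] (B : ℤ) (hB : 1 ≤ B)
    (f : ((Finset.Icc (-B) B : Finset ℤ) → A) → A) (φ : A → ℕ)
    (hcons : conserved (Finset.Icc (-B) B) f φ)
    (a : ℤ → A)
    (ha : (Function.support fun x => φ (a x)).Finite)
    (z : ℤ) :
    (flux B f φ a z ≤ ∑ y ∈ Finset.Icc (z - B) z, (φ (a y) : ℤ)) ∧
    (flux B f φ a z ≤ ∑ y ∈ Finset.Icc z (z + B), (φ (induce (Finset.Icc (-B) B) f a y) : ℤ)) ∧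
    (-(flux B f φ a (z - 1)) ≤ ∑ y ∈ Finset.Icc z (z + B), (φ (a y) : ℤ)) ∧
    (-(flux B f φ a (z - 1)) ≤ ∑ y ∈ Finset.Icc (z - B) z, (φ (induce (Finset.Icc (-B) B) f a y) : ℤ)) := by
  obtain ⟨v, hv⟩ := hcons.1
  set Fa := induce (Finset.Icc (-B) B) f a with hFadef
  have hFa : (Function.support fun x => φ (Fa x)).Finite := hcons.2.1 a ha
  have htot : ∑ᶠ x, φ (Fa x) = ∑ᶠ x, φ (a x) := hcons.2.2 a ha
  set P : ℤ → ℕ := fun w => ∑ᶠ y ∈ Set.Iic w, φ (a y) with hP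
  set Q : ℤ → ℕ := fun w => ∑ᶠ y ∈ Set.Iic w, φ (Fa y) with hQ
  -- Lemma A : P c ≤ Q (c + B)
  have lemA : ∀ c : ℤ, P c ≤ Q (c + B) := by
    intro c
    set aL : ℤ → A := fun y => if y ≤ c then v else a y with haL
    have hfinL : (Function.support fun x => φ (aL x)).Finite := by
      refine ha.subset fun y hy => ?_
      simp only [Function.mem_support, haL] at hy ⊢
      by_cases h : y ≤ c
      · simp [h, hv] at hy
      · simpa [h] using hy
    have totL : ∑ᶠ y, φ (aL y) = ∑ᶠ y ∈ Set.Ioi c, φ (a y) := by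
      rw [aux_total _ hfinL c]
      have h1 : ∑ᶠ y ∈ Set.Iic c, φ (aL y) = ∑ᶠ y ∈ Set.Iic c, (0 : ℕ) :=
        finsum_mem_congr rfl (fun x hx => by
          simp only [haL, if_pos (Set.mem_Iic.mp hx), hv])
      have h2 : ∑ᶠ y ∈ Set.Ioi c, φ (aL y) = ∑ᶠ y ∈ Set.Ioi c, φ (a y) :=
        finsum_mem_congr rfl (fun x hx => by
          simp only [haL, if_neg (not_le.mpr (Set.mem_Ioi.mp hx))])
      rw [h1, h2, finsum_mem_zero, zero_add]
    have hFeq : ∀ y ∈ Set.Ioi (c + B), induce (Finset.Icc (-B) B) f aL y = Fa y := by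
      intro y hy
      have hy' : c + B < y := Set.mem_Ioi.mp hy
      unfold induce
      congr 1
      funext b
      have hb := Finset.mem_Icc.mp b.2
      have : ¬ (y + b.1 ≤ c) := by omega
      simp [haL, this]
    have hfinFL : (Function.support fun x => φ (induce (Finset.Icc (-B) B) f aL x)).Finite :=
      hcons.2.1 aL hfinL
    have htotL : ∑ᶠ x, φ (induce (Finset.Icc (-B) B) f aL x) = ∑ᶠ x, φ (aL x) :=
      hcons.2.2 aL hfinL
    have tail_le : (∑ᶠ y ∈ Set.Ioi (c + B), φ (Fa y)) ≤ ∑ᶠ y ∈ Set.Ioi c, φ (a y) := by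
      have e1 : ∑ᶠ y ∈ Set.Ioi (c + B), φ (Fa y)
          = ∑ᶠ y ∈ Set.Ioi (c + B), φ (induce (Finset.Icc (-B) B) f aL y) :=
        finsum_mem_congr rfl (fun x hx => by rw [hFeq x hx])
      have e2 : (∑ᶠ y ∈ Set.Ioi (c + B), φ (induce (Finset.Icc (-B) B) f aL y))
          ≤ ∑ᶠ y, φ (induce (Finset.Icc (-B) B) f aL y) := by
        rw [aux_total _ hfinFL (c + B)]; exact Nat.le_add_left _ _
      rw [e1, ← totL, ← htotL]; exact e2
    have hsplitFa := aux_total (fun y => φ (Fa y)) hFa (c + B)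
    have hsplita := aux_total (fun y => φ (a y)) ha c
    simp only [hP, hQ]
    omega
  -- Lemma B : Q (c - B) ≤ P c
  have lemB : ∀ c : ℤ, Q (c - B) ≤ P c := by
    intro c
    set aR : ℤ → A := fun y => if y ≤ c then a y else v with haR
    have hfinR : (Function.support fun x => φ (aR x)).Finite := by
      refine ha.subset fun y hy => ?_
      simp only [Function.mem_support, haR] at hy ⊢
      by_cases h : y ≤ c
      · simpa [h] using hy
      · simp [h, hv] at hy
    have totR : ∑ᶠ y, φ (aR y) = P c := by
      rw [aux_total _ hfinR c]
      have h1 : ∑ᶠ y ∈ Set.Iic c, φ (aR y) = ∑ᶠ y ∈ Set.Iic c, φ (a y) :=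
        finsum_mem_congr rfl (fun x hx => by
          simp only [haR, if_pos (Set.mem_Iic.mp hx)])
      have h2 : ∑ᶠ y ∈ Set.Ioi c, φ (aR y) = ∑ᶠ y ∈ Set.Ioi c, (0 : ℕ) :=
        finsum_mem_congr rfl (fun x hx => by
          simp only [haR, if_neg (not_le.mpr (Set.mem_Ioi.mp hx)), hv])
      rw [h1, h2, finsum_mem_zero, add_zero, hP]
    have hFeq : ∀ y ∈ Set.Iic (c - B), induce (Finset.Icc (-B) B) f aR y = Fa y := by
      intro y hy
      have hy' : y ≤ c - B := Set.mem_Iic.mp hy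
      unfold induce
      congr 1
      funext b
      have hb := Finset.mem_Icc.mp b.2
      have : y + b.1 ≤ c := by omega
      simp [haR, this]
    have hfinFR : (Function.support fun x => φ (induce (Finset.Icc (-B) B) f aR x)).Finite :=
      hcons.2.1 aR hfinR
    have htotR : ∑ᶠ x, φ (induce (Finset.Icc (-B) B) f aR x) = ∑ᶠ x, φ (aR x) :=
      hcons.2.2 aR hfinR
    have e1 : Q (c - B) = ∑ᶠ y ∈ Set.Iic (c - B), φ (induce (Finset.Icc (-B) B) f aR y) :=
      finsum_mem_congr rfl (fun x hx => by rw [hFeq x hx])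
    have e2 : (∑ᶠ y ∈ Set.Iic (c - B), φ (induce (Finset.Icc (-B) B) f aR y))
        ≤ ∑ᶠ y, φ (induce (Finset.Icc (-B) B) f aR y) := by
      rw [aux_total _ hfinFR (c - B)]; exact Nat.le_add_right _ _
    calc Q (c - B) ≤ ∑ᶠ y, φ (induce (Finset.Icc (-B) B) f aR y) := e1 ▸ e2
      _ = P c := by rw [htotR, totR]
  -- flux in terms of P and Q
  have hflux : ∀ w : ℤ, flux B f φ a w = (P w : ℤ) - (Q w : ℤ) := by
    intro w
    rw [flux, aux_cast _ ha, aux_cast _ hFa]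
  -- telescoping P and Q
  have hPd : ∀ {w w' : ℤ}, w ≤ w' → P w' = P w + ∑ y ∈ Finset.Ioc w w', φ (a y) :=
    fun h => aux_split _ ha h
  have hQd : ∀ {w w' : ℤ}, w ≤ w' → Q w' = Q w + ∑ y ∈ Finset.Ioc w w', φ (Fa y) :=
    fun h => aux_split _ hFa h
  refine ⟨?_, ?_, ?_, ?_⟩
  · -- (i)
    have h1 := lemA (z - B)
    rw [sub_add_cancel] at h1
    have h2 := hPd (show z - B ≤ z by omega)
    have h3 : ∑ y ∈ Finset.Ioc (z - B) z, φ (a y) ≤ ∑ y ∈ Finset.Icc (z - B) z, φ (a y) :=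
      Finset.sum_le_sum_of_subset Finset.Ioc_subset_Icc_self
    have hcast : (∑ y ∈ Finset.Icc (z - B) z, (φ (a y) : ℤ))
        = ((∑ y ∈ Finset.Icc (z - B) z, φ (a y) : ℕ) : ℤ) := by push_cast; rfl
    rw [hflux, hcast]
    omega
  · -- (ii)
    have h1 := lemA z
    have h2 := hQd (show z ≤ z + B by omega)
    have h3 : ∑ y ∈ Finset.Ioc z (z + B), φ (Fa y) ≤ ∑ y ∈ Finset.Icc z (z + B), φ (Fa y) :=
      Finset.sum_le_sum_of_subset Finset.Ioc_subset_Icc_self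
    have hcast : (∑ y ∈ Finset.Icc z (z + B), (φ (Fa y) : ℤ))
        = ((∑ y ∈ Finset.Icc z (z + B), φ (Fa y) : ℕ) : ℤ) := by push_cast; rfl
    rw [hflux, hcast]
    omega
  · -- (iii)
    have h1 := lemB (z - 1 + B)
    rw [add_sub_cancel_right] at h1
    have h2 := hPd (show z - 1 ≤ z - 1 + B by omega)
    have hsub : Finset.Ioc (z - 1) (z - 1 + B) ⊆ Finset.Icc z (z + B) := by
      intro y hy
      rw [Finset.mem_Ioc] at hy
      rw [Finset.mem_Icc]
      omega
    have h3 : ∑ y ∈ Finset.Ioc (z - 1) (z - 1 + B), φ (a y)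
        ≤ ∑ y ∈ Finset.Icc z (z + B), φ (a y) := Finset.sum_le_sum_of_subset hsub
    have hcast : (∑ y ∈ Finset.Icc z (z + B), (φ (a y) : ℤ))
        = ((∑ y ∈ Finset.Icc z (z + B), φ (a y) : ℕ) : ℤ) := by push_cast; rfl
    rw [hflux, hcast]
    omega
  · -- (iv)
    have h1 := lemB (z - 1)
    have h2 := hQd (show z - 1 - B ≤ z - 1 by omega)
    have hsub : Finset.Ioc (z - 1 - B) (z - 1) ⊆ Finset.Icc (z - B) z := by
      intro y hy
      rw [Finset.mem_Ioc] at hy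
      rw [Finset.mem_Icc]
      omega
    have h3 : ∑ y ∈ Finset.Ioc (z - 1 - B) (z - 1), φ (Fa y)
        ≤ ∑ y ∈ Finset.Icc (z - B) z, φ (Fa y) := Finset.sum_le_sum_of_subset hsub
    have hcast : (∑ y ∈ Finset.Icc (z - B) z, (φ (Fa y) : ℤ))
        = ((∑ y ∈ Finset.Icc (z - B) z, φ (Fa y) : ℕ) : ℤ) := by push_cast; rfl
    rw [hflux, hcast]
    omega
end

section
/- Assume φ : A → ℕ is conserved by F. Then there exists a particle displacement rule compatible with F and φ: a function d : ({−2B, …, 2B} → A) → ({−B, …, B} → ℕ) such that, writing d_{x→y}(a) = d(j ↦ a(x + j))(y − x) for a : ℤ → A and x, y ∈ ℤ with |y − x| ≤ B, the following hold for every configuration a : ℤ → A and every x ∈ ℤ: (C1) φ(a(x)) = ∑_{y = x−B}^{x+B} d_{x→y}(a), and (C2) φ(F(a)(x)) = ∑_{y = x−B}^{x+B} d_{y→x}(a). -/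
/-!
Fix a vacuum state `q`. By conservation applied to truncations of a configuration `a`, the
`flux` at `m`, the mass that the part of `a` right of `m` sends to sites `≤ m + B`, satisfies
the continuity equation `flux (m - 1) + φ (F a (m + B)) = flux m + φ (a m)` and is at most the
mass of `a` on `(m, m + 2B]`. Hence, with `cumMass u` the mass of `a` on `(b, u]`, the function
`cumMassOut w = cumMass (w - B) + flux (w - B)` increases by `φ (F a w)` at each `w`: the two
are the cumulative masses before and after the step in a common frame, and neither runs ahead
of the other by more than `B` sites. Matching mass monotonically, `flow x y` is the length of
`[cumMass (x - 1), cumMass x] ∩ [cumMassOut (y - 1), cumMassOut y]`; these lengths add up to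
`φ (a x)` over `y` and to `φ (F a x)` over `x`. Moving the base point `b` shifts all endpoints by
one constant, so `flow x y` depends only on `a` on `[x - 2B, x + 2B]`.
-/

open Finset

namespace ConservedCA

lemma sum_Ioc_add_sum_Ioc {α M : Type*} [LinearOrder α] [LocallyFiniteOrder α]
    [AddCommMonoid M] (g : α → M) {a b c : α} (hab : a ≤ b) (hbc : b ≤ c) :
    ∑ z ∈ Ioc a b, g z + ∑ z ∈ Ioc b c, g z = ∑ z ∈ Ioc a c, g z := by
  rw [← sum_union (Ioc_disjoint_Ioc_of_le le_rfl), Ioc_union_Ioc_eq_Ioc hab hbc]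

lemma sum_Ioc_sub_one_self {M : Type*} [AddCommMonoid M] (g : ℤ → M) (u : ℤ) :
    ∑ z ∈ Ioc (u - 1) u, g z = g u := by
  rw [Ioc_sub_one_left_eq_Icc, Icc_self, sum_singleton]

lemma sum_Ioc_comp_add {M : Type*} [AddCommMonoid M] (g : ℤ → M) (x b u : ℤ) :
    ∑ z ∈ Ioc b u, g (x + z) = ∑ z ∈ Ioc (x + b) (x + u), g z := by
  rw [← map_add_left_Ioc, sum_map]
  rfl

def overlap (s₀ s₁ t₀ t₁ : ℕ) : ℕ := min s₁ t₁ - max s₀ t₀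

lemma overlap_comm (s₀ s₁ t₀ t₁ : ℕ) : overlap s₀ s₁ t₀ t₁ = overlap t₀ t₁ s₀ s₁ := by
  rw [overlap, overlap, min_comm, max_comm]

lemma overlap_const_add (s₀ s₁ t₀ t₁ c : ℕ) :
    overlap (c + s₀) (c + s₁) (c + t₀) (c + t₁) = overlap s₀ s₁ t₀ t₁ := by
  unfold overlap
  omega

lemma sum_overlap_add_clamp (T : ℤ → ℕ) {s₀ s₁ : ℕ} (hs : s₀ ≤ s₁) (l : ℤ) :
    ∀ r, l ≤ r → (∀ y ∈ Ioc l r, T (y - 1) ≤ T y) →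
      ∑ y ∈ Ioc l r, overlap s₀ s₁ (T (y - 1)) (T y) + max s₀ (min s₁ (T l))
        = max s₀ (min s₁ (T r)) := by
  refine Int.leInduction (by simp) fun r hlr ih hT => ?_
  have hstep := hT (r + 1) (by simp; omega)
  rw [← insert_Ioc_right_eq_Ioc_add_one hlr, sum_insert (by simp), add_sub_cancel_right,
    add_assoc, ih fun y hy => hT y (Ioc_subset_Ioc_right (by omega) hy)]
  rw [add_sub_cancel_right] at hstep
  unfold overlap
  omega

lemma sum_overlap (T : ℤ → ℕ) {s₀ s₁ : ℕ} (hs : s₀ ≤ s₁) {l r : ℤ} (hlr : l ≤ r)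
    (hT : ∀ y ∈ Ioc l r, T (y - 1) ≤ T y) (hl : T l ≤ s₀) (hr : s₁ ≤ T r) :
    ∑ y ∈ Ioc l r, overlap s₀ s₁ (T (y - 1)) (T y) = s₁ - s₀ := by
  have := sum_overlap_add_clamp T hs l r hlr hT
  omega

noncomputable def restrict {A : Type*} (q : A) (s : Set ℤ) (a : ℤ → A) : ℤ → A := by
  classical exact s.piecewise a fun _ => q

section

variable {A : Type*} {B : ℤ} {f : ((Icc (-B) B : Finset ℤ) → A) → A} {φ : A → ℕ} {q : A}

lemma restrict_of_mem {s : Set ℤ} {z : ℤ} (a : ℤ → A) (hz : z ∈ s) : restrict q s a z = a z := by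
  classical exact Set.piecewise_eq_of_mem _ _ _ hz

lemma restrict_of_notMem {s : Set ℤ} {z : ℤ} (a : ℤ → A) (hz : z ∉ s) : restrict q s a z = q := by
  classical exact Set.piecewise_eq_of_notMem _ _ _ hz

local notation "F" => induce (Icc (-B) B) f

lemma induce_congr {a a' : ℤ → A} {y : ℤ} (h : ∀ z ∈ Icc (y - B) (y + B), a z = a' z) :
    F a y = F a' y := by
  unfold induce
  congr 1
  funext j
  have hj := mem_Icc.1 j.2
  exact h _ (mem_Icc.2 ⟨by omega, by omega⟩)

lemma induce_comp_add (a : ℤ → A) (x y : ℤ) : F (fun z => a (x + z)) y = F a (x + y) := by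
  simp only [induce, add_assoc]

variable (φ) in
noncomputable def cumMass (a : ℤ → A) (b u : ℤ) : ℕ := ∑ z ∈ Ioc b u, φ (a z)

variable (B f φ q) in
noncomputable def flux (a : ℤ → A) (m : ℤ) : ℕ :=
  ∑ y ∈ Ioc (m - B) (m + B), φ (F (restrict q (Set.Ioi m) a) y)

variable (B f φ q) in
noncomputable def cumMassOut (a : ℤ → A) (b w : ℤ) : ℕ :=
  cumMass φ a b (w - B) + flux B f φ q a (w - B)

variable (B f φ q) in
noncomputable def flow (a : ℤ → A) (b x y : ℤ) : ℕ :=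
  overlap (cumMass φ a b (x - 1)) (cumMass φ a b x)
    (cumMassOut B f φ q a b (y - 1)) (cumMassOut B f φ q a b y)

lemma cumMass_add (a : ℤ → A) {b c u : ℤ} (hbc : b ≤ c) (hcu : c ≤ u) :
    cumMass φ a b c + cumMass φ a c u = cumMass φ a b u :=
  sum_Ioc_add_sum_Ioc _ hbc hcu

lemma cumMass_sub_one_self (a : ℤ → A) (u : ℤ) : cumMass φ a (u - 1) u = φ (a u) :=
  sum_Ioc_sub_one_self _ u

lemma cumMass_sub_one_add (a : ℤ → A) {b u : ℤ} (hbu : b < u) :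
    cumMass φ a b (u - 1) + φ (a u) = cumMass φ a b u := by
  rw [← cumMass_sub_one_self (φ := φ) a u, cumMass_add a (by omega) (by omega)]

lemma cumMass_congr {a a' : ℤ → A} {b u : ℤ} (h : ∀ z ∈ Ioc b u, a z = a' z) :
    cumMass φ a b u = cumMass φ a' b u :=
  sum_congr rfl fun z hz => by rw [h z hz]

lemma cumMass_comp_add (a : ℤ → A) (x b u : ℤ) :
    cumMass φ (fun z => a (x + z)) b u = cumMass φ a (x + b) (x + u) :=
  sum_Ioc_comp_add (fun z => φ (a z)) x b u

lemma cumMassOut_add (a : ℤ → A) {b c w : ℤ} (hbc : b ≤ c) (hcw : c + B ≤ w) :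
    cumMass φ a b c + cumMassOut B f φ q a c w = cumMassOut B f φ q a b w := by
  unfold cumMassOut
  rw [← cumMass_add a hbc (by omega : c ≤ w - B), add_assoc]

lemma flow_rebase (a : ℤ → A) {b c x y : ℤ} (hbc : b ≤ c) (hcx : c < x) (hcy : c + B < y) :
    flow B f φ q a b x y = flow B f φ q a c x y := by
  unfold flow
  rw [← cumMass_add a hbc (by omega : c ≤ x - 1), ← cumMass_add a hbc hcx.le,
    ← cumMassOut_add a hbc (by omega : c + B ≤ y - 1), ← cumMassOut_add a hbc hcy.le,
    overlap_const_add]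

lemma restrict_eq_restrict {s s' : Set ℤ} {a a' : ℤ → A} {z : ℤ} (hs : z ∈ s ↔ z ∈ s')
    (ha : z ∈ s → a z = a' z) : restrict q s a z = restrict q s' a' z := by
  by_cases hz : z ∈ s
  · rw [restrict_of_mem a hz, restrict_of_mem a' (hs.1 hz), ha hz]
  · rw [restrict_of_notMem a hz, restrict_of_notMem a' (mt hs.2 hz)]

lemma flux_congr {a a' : ℤ → A} {m : ℤ} (h : ∀ z ∈ Ioc m (m + 2 * B), a z = a' z) :
    flux B f φ q a m = flux B f φ q a' m := by
  refine sum_congr rfl fun y hy => congrArg φ (induce_congr fun z hz => ?_)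
  simp only [mem_Ioc, mem_Icc] at hy hz
  exact restrict_eq_restrict Iff.rfl fun hmz => h z (mem_Ioc.2 ⟨hmz, by omega⟩)

lemma flux_comp_add (a : ℤ → A) (x m : ℤ) :
    flux B f φ q (fun z => a (x + z)) m = flux B f φ q a (x + m) := by
  have hr : restrict q (Set.Ioi m) (fun z => a (x + z))
      = fun z => restrict q (Set.Ioi (x + m)) a (x + z) := by
    funext z
    by_cases hz : m < z
    · rw [restrict_of_mem _ (Set.mem_Ioi.2 hz), restrict_of_mem _ (Set.mem_Ioi.2 (by omega))]
    · rw [restrict_of_notMem _ (mt Set.mem_Ioi.1 hz),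
        restrict_of_notMem _ (mt Set.mem_Ioi.1 (by omega))]
  unfold flux
  rw [hr]
  simp only [induce_comp_add]
  rw [sum_Ioc_comp_add (fun y => φ (F (restrict q (Set.Ioi (x + m)) a) y)), add_sub_assoc,
    add_assoc]

lemma flow_comp_add (a : ℤ → A) (x b u v : ℤ) :
    flow B f φ q (fun z => a (x + z)) b u v = flow B f φ q a (x + b) (x + u) (x + v) := by
  simp only [flow, cumMassOut, cumMass_comp_add, flux_comp_add, add_sub_assoc]

lemma flow_congr {a a' : ℤ → A} {x y : ℤ} (h : ∀ z ∈ Icc (x - 2 * B) (x + 2 * B), a z = a' z)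
    (hy : y ∈ Icc (x - B) (x + B)) :
    flow B f φ q a (x - 2 * B - 1) x y = flow B f φ q a' (x - 2 * B - 1) x y := by
  rw [mem_Icc] at hy
  have hS : ∀ u ≤ x, cumMass φ a (x - 2 * B - 1) u = cumMass φ a' (x - 2 * B - 1) u :=
    fun u hu => cumMass_congr fun z hz => h z (by simp only [mem_Ioc, mem_Icc] at hz ⊢; omega)
  have hΛ : ∀ m, x - 2 * B - 1 ≤ m → m ≤ x → flux B f φ q a m = flux B f φ q a' m :=
    fun m hm hm' => flux_congr fun z hz => h z (by simp only [mem_Ioc, mem_Icc] at hz ⊢; omega)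
  simp only [flow, cumMassOut]
  rw [hS (x - 1) (by omega), hS x le_rfl, hS (y - 1 - B) (by omega), hS (y - B) (by omega),
    hΛ (y - 1 - B) (by omega) (by omega), hΛ (y - B) (by omega) (by omega)]

lemma flow_window {a c : ℤ → A} {x k : ℤ} (hc : ∀ u ∈ Icc (-(2 * B)) (2 * B), c u = a (x + u))
    (hk : k ∈ Icc (-B) B) :
    flow B f φ q c (-(2 * B) - 1) 0 k = flow B f φ q a (x - 2 * B - 1) x (x + k) := by
  have := flow_congr (q := q) (f := f) (φ := φ) (x := 0) (a' := fun u => a (x + u))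
    (fun u hu => hc u (by simpa using hu)) (by simpa using hk)
  rw [zero_sub] at this
  rw [this, flow_comp_add, add_zero, show x + (-(2 * B) - 1) = x - 2 * B - 1 by ring]

lemma flux_eq_sum_restrict_Ioc (a : ℤ → A) {m n : ℤ} (hn : m + 2 * B ≤ n) :
    flux B f φ q a m = ∑ y ∈ Ioc (m - B) (m + B), φ (F (restrict q (Set.Ioc m n) a) y) := by
  refine sum_congr rfl fun y hy => congrArg φ (induce_congr fun z hz => ?_)
  simp only [mem_Ioc, mem_Icc] at hy hz
  exact restrict_eq_restrict (by simp only [Set.mem_Ioi, Set.mem_Ioc]; omega) fun _ => rfl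

section Conserved

variable (hq : φ q = 0) (hcons : conserved (Icc (-B) B) f φ)
include hq hcons

lemma phi_induce_eq_zero {a : ℤ → A} {y : ℤ} (ha : ∀ z ∈ Icc (y - B) (y + B), a z = q) :
    φ (F a y) = 0 := by
  rw [induce_congr (a' := fun _ => q) ha]
  by_contra h
  have hfin := hcons.2.1 (fun _ => q) (by simp [hq])
  exact Set.infinite_univ (hfin.subset fun y' _ => h)

lemma sum_induce_restrict_Ioc (a : ℤ → A) (m n : ℤ) :
    ∑ y ∈ Ioc (m - B) (n + B), φ (F (restrict q (Set.Ioc m n) a) y) = cumMass φ a m n := by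
  have hin : Function.support (fun z => φ (restrict q (Set.Ioc m n) a z)) ⊆ Ioc m n := by
    intro z hz
    by_contra hzn
    rw [coe_Ioc] at hzn
    exact hz (by simp only [restrict_of_notMem a hzn, hq])
  have hout : Function.support (fun y => φ (F (restrict q (Set.Ioc m n) a) y))
      ⊆ Ioc (m - B) (n + B) := by
    intro y hy
    by_contra hyn
    refine hy (phi_induce_eq_zero hq hcons fun z hz => restrict_of_notMem a ?_)
    simp only [coe_Ioc, Set.mem_Ioc, not_and_or, not_lt, not_le] at hyn
    simp only [mem_Icc] at hz
    simp only [Set.mem_Ioc, not_and_or, not_lt, not_le]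
    omega
  have := hcons.2.2 (restrict q (Set.Ioc m n) a) ((finite_toSet _).subset hin)
  rw [finsum_eq_sum_of_support_subset _ hout, finsum_eq_sum_of_support_subset _ hin] at this
  rw [this, cumMass]
  exact sum_congr rfl fun z hz => by rw [restrict_of_mem a (by simpa using hz)]

lemma flux_le_cumMass (hB : 0 ≤ B) (a : ℤ → A) (m : ℤ) :
    flux B f φ q a m ≤ cumMass φ a m (m + 2 * B) := by
  rw [flux_eq_sum_restrict_Ioc a le_rfl, ← sum_induce_restrict_Ioc hq hcons a m (m + 2 * B),
    ← sum_Ioc_add_sum_Ioc _ (by omega : m - B ≤ m + B) (by omega : m + B ≤ m + 2 * B + B)]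
  exact Nat.le_add_right _ _

/-- The continuity equation, from conservation for `a` truncated to `(m - 1, m + 2B]` and to
`(m, m + 2B]`. -/
lemma flux_sub_one_add (hB : 0 ≤ B) (a : ℤ → A) (m : ℤ) :
    flux B f φ q a (m - 1) + φ (F a (m + B)) = flux B f φ q a m + φ (a m) := by
  set R := ∑ y ∈ Ioc (m + B) (m + 2 * B + B), φ (F (restrict q (Set.Ioc m (m + 2 * B)) a) y)
  have hwide := sum_induce_restrict_Ioc hq hcons a (m - 1) (m + 2 * B)
  have hnarrow := sum_induce_restrict_Ioc hq hcons a m (m + 2 * B)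
  rw [← sum_Ioc_add_sum_Ioc _ (by omega : m - 1 - B ≤ m + B) (by omega),
    ← sum_Ioc_add_sum_Ioc _ (by omega : m - 1 - B ≤ m - 1 + B) (by omega),
    ← flux_eq_sum_restrict_Ioc a (by omega), show m - 1 + B = m + B - 1 by ring,
    sum_Ioc_sub_one_self] at hwide
  rw [← sum_Ioc_add_sum_Ioc _ (by omega : m - B ≤ m + B) (by omega),
    ← flux_eq_sum_restrict_Ioc a (by omega)] at hnarrow
  have hmid : F (restrict q (Set.Ioc (m - 1) (m + 2 * B)) a) (m + B) = F a (m + B) :=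
    induce_congr fun z hz => restrict_of_mem a (by simp only [mem_Icc] at hz; simp; omega)
  have hright : ∑ y ∈ Ioc (m + B) (m + 2 * B + B),
      φ (F (restrict q (Set.Ioc (m - 1) (m + 2 * B)) a) y) = R := by
    refine sum_congr rfl fun y hy => congrArg φ (induce_congr fun z hz => ?_)
    simp only [mem_Ioc, mem_Icc] at hy hz
    exact restrict_eq_restrict (by simp only [Set.mem_Ioc]; omega) fun _ => rfl
  rw [hmid, hright, ← cumMass_add a (by omega : m - 1 ≤ m) (by omega : m ≤ m + 2 * B),
    cumMass_sub_one_self] at hwide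
  omega

lemma cumMassOut_sub_one_add (hB : 0 ≤ B) (a : ℤ → A) {b w : ℤ} (hbw : b + B < w) :
    cumMassOut B f φ q a b (w - 1) + φ (F a w) = cumMassOut B f φ q a b w := by
  have hcont := flux_sub_one_add hq hcons hB a (w - B)
  have hmass := cumMass_sub_one_add (φ := φ) a (by omega : b < w - B)
  rw [sub_add_cancel] at hcont
  unfold cumMassOut
  rw [show w - 1 - B = w - B - 1 by ring]
  omega

lemma sum_flow_source (hB : 0 ≤ B) (a : ℤ → A) {b x : ℤ} (hbx : b + 2 * B < x) :
    ∑ y ∈ Ioc (x - B - 1) (x + B), flow B f φ q a b x y = φ (a x) := by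
  have hx := cumMass_sub_one_add (φ := φ) a (by omega : b < x)
  have hleft : cumMassOut B f φ q a b (x - B - 1) ≤ cumMass φ a b (x - 1) := by
    have hflux := flux_le_cumMass hq hcons hB a (x - B - 1 - B)
    rw [show x - B - 1 - B + 2 * B = x - 1 by ring] at hflux
    rw [cumMassOut,
      ← cumMass_add a (by omega : b ≤ x - B - 1 - B) (by omega : x - B - 1 - B ≤ x - 1)]
    omega
  have hright : cumMass φ a b x ≤ cumMassOut B f φ q a b (x + B) := by
    rw [cumMassOut, add_sub_cancel_right]
    exact Nat.le_add_right _ _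
  unfold flow
  rw [sum_overlap _ (by omega) (by omega) (fun y hy => ?_) hleft hright]
  · omega
  · have := cumMassOut_sub_one_add hq hcons hB a (by simp only [mem_Ioc] at hy; omega : b + B < y)
    omega

lemma sum_flow_target (hB : 0 ≤ B) (a : ℤ → A) {b x : ℤ} (hbx : b + B < x) :
    ∑ y ∈ Ioc (x - B - 1) (x + B), flow B f φ q a b y x = φ (F a x) := by
  have hx := cumMassOut_sub_one_add hq hcons hB a hbx
  have hleft : cumMass φ a b (x - B - 1) ≤ cumMassOut B f φ q a b (x - 1) := by
    rw [cumMassOut, show x - 1 - B = x - B - 1 by ring]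
    exact Nat.le_add_right _ _
  have hright : cumMassOut B f φ q a b x ≤ cumMass φ a b (x + B) := by
    have hflux := flux_le_cumMass hq hcons hB a (x - B)
    rw [show x - B + 2 * B = x + B by ring] at hflux
    rw [cumMassOut, ← cumMass_add a (by omega : b ≤ x - B) (by omega : x - B ≤ x + B)]
    omega
  simp only [flow, overlap_comm (cumMass φ a b _)]
  rw [sum_overlap _ (by omega) (by omega) (fun y hy => ?_) hleft hright]
  · omega
  · have := cumMass_sub_one_add (φ := φ) a (by simp only [mem_Ioc] at hy; omega : b < y)
    omega

end Conserved

end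

end ConservedCA

open ConservedCA

theorem stmt16 {A : Type*} (B : ℤ) (hB : 1 ≤ B)
    (f : ((Finset.Icc (-B) B : Finset ℤ) → A) → A) (φ : A → ℕ)
    (hcons : conserved (Finset.Icc (-B) B) f φ) :
    ∃ d : ((Finset.Icc (-(2 * B)) (2 * B) : Finset ℤ) → A) →
          ((Finset.Icc (-B) B : Finset ℤ) → ℕ),
      ∀ (a : ℤ → A) (x : ℤ),
        (φ (a x) = ∑ y ∈ (Finset.Icc (x - B) (x + B)).attach,
            d (fun j => a (x + j.1))
              ⟨y.1 - x, by
                have hy := y.2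
                rw [Finset.mem_Icc] at hy ⊢
                omega⟩) ∧
        (φ (induce (Finset.Icc (-B) B) f a x) =
          ∑ y ∈ (Finset.Icc (x - B) (x + B)).attach,
            d (fun j => a (y.1 + j.1))
              ⟨x - y.1, by
                have hy := y.2
                rw [Finset.mem_Icc] at hy ⊢
                omega⟩) := by
  obtain ⟨q, hq⟩ := hcons.1
  have hB₀ : 0 ≤ B := by omega
  have window : ∀ (a : ℤ → A) (x y : ℤ), y ∈ Icc (x - B) (x + B) →
      flow B f φ q (fun u => if h : u ∈ Icc (-(2 * B)) (2 * B) then a (x + u) else q)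
        (-(2 * B) - 1) 0 (y - x) = flow B f φ q a (x - 2 * B - 1) x y := by
    intro a x y hy
    rw [flow_window (fun u hu => dif_pos hu) (by simp only [mem_Icc] at hy ⊢; omega),
      add_sub_cancel]
  refine ⟨fun w k => flow B f φ q
    (fun u => if h : u ∈ Icc (-(2 * B)) (2 * B) then w ⟨u, h⟩ else q) (-(2 * B) - 1) 0 k,
    fun a x => ⟨?_, ?_⟩⟩
  · calc φ (a x) = ∑ y ∈ Icc (x - B) (x + B), flow B f φ q a (x - 2 * B - 1) x y := by
          rw [← sum_flow_source hq hcons hB₀ a (by omega : x - 2 * B - 1 + 2 * B < x),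
            Ioc_sub_one_left_eq_Icc]
      _ = _ := (sum_attach _ _).symm.trans (sum_congr rfl fun y _ => (window a x y y.2).symm)
  · calc φ (induce (Icc (-B) B) f a x)
          = ∑ y ∈ Icc (x - B) (x + B), flow B f φ q a (x - 3 * B - 1) y x := by
          rw [← sum_flow_target hq hcons hB₀ a (by omega : x - 3 * B - 1 + B < x),
            Ioc_sub_one_left_eq_Icc]
      -- all flows into `x` are read in the common frame `x - 3B - 1`
      _ = ∑ y ∈ Icc (x - B) (x + B), flow B f φ q a (y - 2 * B - 1) y x :=
          sum_congr rfl fun y hy => by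
            rw [mem_Icc] at hy
            exact flow_rebase a (by omega) (by omega) (by omega)
      _ = _ := (sum_attach _ _).symm.trans (sum_congr rfl fun y _ => (window a y x
          (by have := mem_Icc.1 y.2; exact mem_Icc.2 ⟨by omega, by omega⟩)).symm)
end
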